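/- Let m ∈ (1/2)ℕ, s, b ∈ (1/2)ℤ, a ∈ (1/2)ℤ with a ≥ 0, and j ∈ s + ℤ; let τ lie in the upper half-plane. (1) If e^{4πisb} e^{8πimab} = −1, then R^{(+)}_{j,m}(τ, aτ+b) − R^{(+)}_{2m−j,m}(τ, aτ+b) = −2 e^{2πijb} e^{4πisb} Σ_{k∈ℤ, 1≤k≤2a} e^{4πimbk} q^{−(j+2m(2a−k))(j−2mk)/(4m)}. (2) If (−1)^{2a} e^{4πisb} e^{8πimab} = −1, then R^{(−)}_{j,m}(τ, aτ+b) + R^{(−)}_{2m−j,m}(τ, aτ+b) = −2 e^{2πijb} e^{4πisb} Σ_{k∈ℤ, 1≤k≤2a} (−1)^k e^{4πimbk} q^{−(j+2m(2a−k))(j−2mk)/(4m)}. -/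

import Mathlib

/-!
Index the terms of `R_j` by `k = 2a - K` and those of `R_{2m-j}` by `K - 1`. The indices
`n = j + 2m(2a - K)` and `n' = 2mK - j` are mirror images, `n + n' = 4ma`, about the point
`2m Im w / Im τ = 2ma` where the arguments of `E` vanish. Since `E` is odd, the `E`-parts of the
two terms cancel; for `w = aτ + b` the Gaussian factors at `n` and `4ma - n` differ by
`e(2sb) e(4mab) = -ε^{2a}`. What is left is `sgn + sgn'` times a single term, and the two signs
cancel unless `1 ≤ K ≤ 2a`, so the series collapses to a finite sum. Convergence comes from
`|sgn x - E x| ≤ 2 e^{-πx²}`, which beats the growth of the Gaussian factor.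
-/

noncomputable section

open scoped BigOperators

namespace Mock

/-- `e x = exp(2πix)` -/
def e (x : ℂ) : ℂ := Complex.exp (2 * (Real.pi : ℂ) * Complex.I * x)

/-- `qpow τ a = q^a = exp(2πiaτ)` for a real exponent `a` -/
def qpow (τ : ℂ) (a : ℝ) : ℂ := Complex.exp (2 * (Real.pi : ℂ) * Complex.I * (a : ℂ) * τ)

/-- Jacobi theta function `θ^{(ε)}_{k,m}(τ,z)` -/
def theta (ε : ℂ) (k m : ℝ) (τ z : ℂ) : ℂ :=
  ∑' j : ℤ, ε ^ j * e ((m : ℂ) * ((j : ℂ) + (k : ℂ) / (2 * (m : ℂ))) * z)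
      * qpow τ (m * ((j : ℝ) + k / (2 * m)) ^ 2)

/-- `Φ^{(ε)[m,s]}_1` -/
def Phi1 (ε : ℂ) (m s : ℝ) (τ z₁ z₂ t : ℂ) : ℂ :=
  e (-(m : ℂ) * t) * ∑' j : ℤ,
    ε ^ j * e ((m : ℂ) * (j : ℂ) * (z₁ + z₂) + (s : ℂ) * z₁)
      * qpow τ (m * (j : ℝ) ^ 2 + s * (j : ℝ)) / (1 - e z₁ * qpow τ (j : ℝ))

/-- `Φ^{(ε)[m,s]}_2` -/
def Phi2 (ε : ℂ) (m s : ℝ) (τ z₁ z₂ t : ℂ) : ℂ :=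
  e (-(m : ℂ) * t) * ∑' j : ℤ,
    ε ^ j * e (-(m : ℂ) * (j : ℂ) * (z₁ + z₂) - (s : ℂ) * z₂)
      * qpow τ (m * (j : ℝ) ^ 2 + s * (j : ℝ)) / (1 - e (-z₂) * qpow τ (j : ℝ))

/-- `Φ^{(ε)[m,s]} = Φ₁ - Φ₂` -/
def Phi (ε : ℂ) (m s : ℝ) (τ z₁ z₂ t : ℂ) : ℂ :=
  Phi1 ε m s τ z₁ z₂ t - Phi2 ε m s τ z₁ z₂ t

/-- `E(x) = 2∫₀ˣ e^{−πt²} dt` -/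
def Efun (x : ℝ) : ℝ := 2 * ∫ t in (0:ℝ)..x, Real.exp (-Real.pi * t ^ 2)

/-- `P^{(ε)}_{j,m}(τ,w)` -/
def Pfun (ε : ℂ) (j m : ℝ) (τ w : ℂ) : ℂ :=
  ∑' k : ℤ, ε ^ k *
    (Efun ((j + 2 * m * (k : ℝ) - 2 * m * (w.im / τ.im)) * Real.sqrt (τ.im / m)) : ℂ) *
    Complex.exp (-(Real.pi : ℂ) * Complex.I * τ * ((j : ℂ) + 2 * (m : ℂ) * (k : ℂ)) ^ 2 / (2 * (m : ℂ))
      + 2 * (Real.pi : ℂ) * Complex.I * ((j : ℂ) + 2 * (m : ℂ) * (k : ℂ)) * w)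

/-- `Q^{(ε)}_{j,m}(τ,w)` -/
def Qfun (ε : ℂ) (j m : ℝ) (τ w : ℂ) : ℂ :=
  ∑' k : ℤ, ε ^ k * (if 0 ≤ k then (1 : ℂ) else -1) *
    Complex.exp (-(Real.pi : ℂ) * Complex.I * τ * ((j : ℂ) + 2 * (m : ℂ) * (k : ℂ)) ^ 2 / (2 * (m : ℂ))
      + 2 * (Real.pi : ℂ) * Complex.I * ((j : ℂ) + 2 * (m : ℂ) * (k : ℂ)) * w)

/-- `R^{(ε)}_{j,m}(τ,w)`, the sum over `n = j + 2mk`, `k ∈ ℤ` -/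
def Rfun (ε : ℂ) (j m : ℝ) (τ w : ℂ) : ℂ :=
  ∑' k : ℤ, ε ^ k *
    ((Real.sign (2 * m * (k : ℝ) + 2 * m - 1 / 2) : ℂ)
      - (Efun ((j + 2 * m * (k : ℝ) - 2 * m * (w.im / τ.im)) * Real.sqrt (τ.im / m)) : ℂ)) *
    Complex.exp (-(Real.pi : ℂ) * Complex.I * τ * ((j : ℂ) + 2 * (m : ℂ) * (k : ℂ)) ^ 2 / (2 * (m : ℂ))
      + 2 * (Real.pi : ℂ) * Complex.I * ((j : ℂ) + 2 * (m : ℂ) * (k : ℂ)) * w)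

/-- correction term `Φ^{(ε)[m,s]}_{add}`; the finite sum over `k ∈ s+ℤ`, `s ≤ k < s+2m`
is parametrized by `k = s + n`, `0 ≤ n < 2m`. -/
def PhiAdd (ε : ℂ) (m s : ℝ) (τ z₁ z₂ t : ℂ) : ℂ :=
  -(1/2) * e (-(m : ℂ) * t) *
    ∑' n : ℤ, if 0 ≤ n ∧ (n : ℝ) < 2 * m then
      Rfun ε (s + (n : ℝ)) m τ ((z₁ - z₂) / 2) *
        (theta ε (s + (n : ℝ)) m τ (z₁ + z₂) - theta ε (-(s + (n : ℝ))) m τ (z₁ + z₂))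
    else 0

/-- Zwegers modification `Φ̃^{(ε)[m,s]}` -/
def PhiTilde (ε : ℂ) (m s : ℝ) (τ z₁ z₂ t : ℂ) : ℂ :=
  Phi ε m s τ z₁ z₂ t + PhiAdd ε m s τ z₁ z₂ t

/-- Dedekind eta function -/
def eta (τ : ℂ) : ℂ := qpow τ (1/24) * ∏' n : ℕ, (1 - qpow τ ((n : ℝ) + 1))

/-- Mumford theta `ϑ₁₁(τ,z) = i θ^{(−)}_{1/2,1/2}(τ,2z)` -/
def vtheta11 (τ z : ℂ) : ℂ := Complex.I * theta (-1) (1/2) (1/2) τ (2 * z)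

/-- Mumford theta `ϑ₁₀(τ,z) = θ^{(+)}_{1/2,1/2}(τ,2z)` -/
def vtheta10 (τ z : ℂ) : ℂ := theta 1 (1/2) (1/2) τ (2 * z)

/-- the half-odd integer `(2n+1)/2` -/
def hodd (n : ℕ) : ℝ := (2 * (n : ℝ) + 1) / 2

def psi1 (m : ℝ) (τ z : ℂ) : ℂ :=
  PhiTilde (-1) m (1/2) τ (z/2 + τ/2 - 1/2) (z/2 - τ/2 + 1/2) 0
def psi2 (m : ℝ) (τ z : ℂ) : ℂ :=
  PhiTilde (-1) m (1/2) τ (z/2 + τ/2) (z/2 - τ/2) 0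
def psi3 (m : ℝ) (τ z : ℂ) : ℂ :=
  PhiTilde (-1) m (1/2) τ (z/2 - 1/2) (z/2 + 1/2) 0

def Xi1 (m : ℝ) (p : ℤ) (τ z : ℂ) : ℂ :=
  qpow τ (-m/4) * theta (-1) ((2 * (p : ℝ) + 1) * m) (m + 1/2) τ 0 * psi1 m τ z
def Xi2 (m : ℝ) (p : ℤ) (τ z : ℂ) : ℂ :=
  qpow τ (-m/4) * theta 1 ((2 * (p : ℝ) + 1) * m) (m + 1/2) τ 0 * psi2 m τ z
def Xi3 (m : ℝ) (p : ℤ) (τ z : ℂ) : ℂ :=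
  theta (-1) (2 * (p : ℝ) * m) (m + 1/2) τ 0 * psi3 m τ z

def Ups1 (m : ℝ) (p : ℤ) (τ z : ℂ) : ℂ :=
  -Complex.I * eta τ ^ 3 *
    (theta (-1) ((p : ℝ) + 1/2) (m + 1/2) τ z - theta (-1) (-((p : ℝ) + 1/2)) (m + 1/2) τ z) /
    theta 1 0 (1/2) τ z
def Ups2 (m : ℝ) (p : ℤ) (τ z : ℂ) : ℂ :=
  eta τ ^ 3 *
    (theta 1 ((p : ℝ) + 1/2) (m + 1/2) τ z - theta 1 (-((p : ℝ) + 1/2)) (m + 1/2) τ z) /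
    theta (-1) 0 (1/2) τ z
def Ups3 (m : ℝ) (p : ℤ) (τ z : ℂ) : ℂ :=
  -Complex.I * eta τ ^ 3 *
    (theta (-1) (p : ℝ) (m + 1/2) τ z - theta (-1) (-(p : ℝ)) (m + 1/2) τ z) /
    theta 1 (1/2) (1/2) τ z

def G1 (m : ℝ) (p : ℤ) (τ z : ℂ) : ℂ := Xi1 m p τ z - Ups1 m p τ z
def G2 (m : ℝ) (p : ℤ) (τ z : ℂ) : ℂ := Xi2 m p τ z - Ups2 m p τ z
def G3 (m : ℝ) (p : ℤ) (τ z : ℂ) : ℂ := Xi3 m p τ z - Ups3 m p τ z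

/-- `ω^{[m]}_{j,k}(z₁,z₂,z₃)` -/
def omega (m : ℝ) (j k : ℕ) (z₁ z₂ z₃ : ℂ) : ℂ :=
  e ((j : ℂ) * (z₁ - z₂)) * e ((2 * (m : ℂ) * (j : ℂ) - (k : ℂ)) * (z₁ - 2 * z₂ - z₃) / 2)
  + e (-(j : ℂ) * (z₁ - z₂)) * e (-(2 * (m : ℂ) * (j : ℂ) - (k : ℂ)) * (z₁ - 2 * z₂ - z₃) / 2)
  - e ((j : ℂ) * (z₁ - z₂)) * e ((2 * (m : ℂ) * (j : ℂ) - (k : ℂ)) * (z₁ + z₃) / 2)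
  - e (-(j : ℂ) * (z₁ - z₂)) * e (-(2 * (m : ℂ) * (j : ℂ) - (k : ℂ)) * (z₁ + z₃) / 2)

/-- indefinite modular form `g^{(1)[m,p]}_k(τ)` (with the convention of the paper,
split according to `k = m` or `k < m`). -/
def g1 (m : ℝ) (p : ℤ) (k : ℝ) (τ : ℂ) : ℂ :=
  if k = m then
    ((∑' x : ℤ × ℤ, if 0 < x.2 ∧ x.2 ≤ x.1 then
        (-1 : ℂ) ^ x.1 * e ((m : ℂ) / 2) *
          qpow τ ((m + 1/2) * ((x.1 : ℝ) + m * (2 * (p : ℝ) + 1) / (2 * m + 1)) ^ 2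
            - m * ((x.2 : ℝ) + (p : ℝ)) ^ 2) else 0)
      - (∑' x : ℤ × ℤ, if x.1 < x.2 ∧ x.2 ≤ 0 then
        (-1 : ℂ) ^ x.1 * e ((m : ℂ) / 2) *
          qpow τ ((m + 1/2) * ((x.1 : ℝ) + m * (2 * (p : ℝ) + 1) / (2 * m + 1)) ^ 2
            - m * ((x.2 : ℝ) + (p : ℝ)) ^ 2) else 0))
    + (1/2) * e ((m : ℂ) / 2) * theta (-1) ((2 * (p : ℝ) + 1) * m) (m + 1/2) τ 0 *
        ∑ r ∈ Finset.Icc (-p) p, qpow τ (-m * (r : ℝ) ^ 2)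
  else
    ((∑' x : ℤ × ℤ, if 0 ≤ x.2 ∧ x.2 < x.1 then
        (-1 : ℂ) ^ x.1 * e ((k : ℂ) / 2) *
          qpow τ ((m + 1/2) * ((x.1 : ℝ) + m * (2 * (p : ℝ) + 1) / (2 * m + 1)) ^ 2
            - m * ((x.2 : ℝ) + (p : ℝ) + (m + k) / (2 * m)) ^ 2) else 0)
      - (∑' x : ℤ × ℤ, if x.1 ≤ x.2 ∧ x.2 < 0 then
        (-1 : ℂ) ^ x.1 * e ((k : ℂ) / 2) *
          qpow τ ((m + 1/2) * ((x.1 : ℝ) + m * (2 * (p : ℝ) + 1) / (2 * m + 1)) ^ 2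
            - m * ((x.2 : ℝ) + (p : ℝ) + (m + k) / (2 * m)) ^ 2) else 0))
    + ((∑' x : ℤ × ℤ, if 0 ≤ x.2 ∧ x.2 ≤ x.1 then
        (-1 : ℂ) ^ x.1 * e ((k : ℂ) / 2) *
          qpow τ ((m + 1/2) * ((x.1 : ℝ) + m * (2 * (p : ℝ) + 1) / (2 * m + 1)) ^ 2
            - m * ((x.2 : ℝ) + (p : ℝ) + (m - k) / (2 * m)) ^ 2) else 0)
      - (∑' x : ℤ × ℤ, if x.1 < x.2 ∧ x.2 < 0 then
        (-1 : ℂ) ^ x.1 * e ((k : ℂ) / 2) *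
          qpow τ ((m + 1/2) * ((x.1 : ℝ) + m * (2 * (p : ℝ) + 1) / (2 * m + 1)) ^ 2
            - m * ((x.2 : ℝ) + (p : ℝ) + (m - k) / (2 * m)) ^ 2) else 0))
    + e ((k : ℂ) / 2) * theta (-1) ((2 * (p : ℝ) + 1) * m) (m + 1/2) τ 0 *
        ∑ r ∈ Finset.Icc (-p + 1) p, qpow τ (-m * ((r : ℝ) + (k - m) / (2 * m)) ^ 2)

/-- indefinite modular form `g^{(2)[m,p]}_k(τ)` -/
def g2 (m : ℝ) (p : ℤ) (k : ℝ) (τ : ℂ) : ℂ :=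
  if k = m then
    -(-1 : ℂ) ^ p *
      ((∑' x : ℤ × ℤ, if 0 < x.2 ∧ x.2 ≤ x.1 then
          (-1 : ℂ) ^ x.2 *
            qpow τ ((m + 1/2) * ((x.1 : ℝ) + m * (2 * (p : ℝ) + 1) / (2 * m + 1)) ^ 2
              - m * ((x.2 : ℝ) + (p : ℝ)) ^ 2) else 0)
        - (∑' x : ℤ × ℤ, if x.1 < x.2 ∧ x.2 ≤ 0 then
          (-1 : ℂ) ^ x.2 *
            qpow τ ((m + 1/2) * ((x.1 : ℝ) + m * (2 * (p : ℝ) + 1) / (2 * m + 1)) ^ 2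
              - m * ((x.2 : ℝ) + (p : ℝ)) ^ 2) else 0))
    - (1/2) * theta 1 ((2 * (p : ℝ) + 1) * m) (m + 1/2) τ 0 *
        ∑ r ∈ Finset.Icc (-p) p, (-1 : ℂ) ^ r * qpow τ (-m * (r : ℝ) ^ 2)
  else
    (-1 : ℂ) ^ p *
      ((∑' x : ℤ × ℤ, if 0 ≤ x.2 ∧ x.2 < x.1 then
          (-1 : ℂ) ^ x.2 *
            qpow τ ((m + 1/2) * ((x.1 : ℝ) + m * (2 * (p : ℝ) + 1) / (2 * m + 1)) ^ 2
              - m * ((x.2 : ℝ) + (p : ℝ) + (m + k) / (2 * m)) ^ 2) else 0)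
        - (∑' x : ℤ × ℤ, if x.1 ≤ x.2 ∧ x.2 < 0 then
          (-1 : ℂ) ^ x.2 *
            qpow τ ((m + 1/2) * ((x.1 : ℝ) + m * (2 * (p : ℝ) + 1) / (2 * m + 1)) ^ 2
              - m * ((x.2 : ℝ) + (p : ℝ) + (m + k) / (2 * m)) ^ 2) else 0))
    - (-1 : ℂ) ^ p *
      ((∑' x : ℤ × ℤ, if 0 ≤ x.2 ∧ x.2 ≤ x.1 then
          (-1 : ℂ) ^ x.2 *
            qpow τ ((m + 1/2) * ((x.1 : ℝ) + m * (2 * (p : ℝ) + 1) / (2 * m + 1)) ^ 2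
              - m * ((x.2 : ℝ) + (p : ℝ) + (m - k) / (2 * m)) ^ 2) else 0)
        - (∑' x : ℤ × ℤ, if x.1 < x.2 ∧ x.2 < 0 then
          (-1 : ℂ) ^ x.2 *
            qpow τ ((m + 1/2) * ((x.1 : ℝ) + m * (2 * (p : ℝ) + 1) / (2 * m + 1)) ^ 2
              - m * ((x.2 : ℝ) + (p : ℝ) + (m - k) / (2 * m)) ^ 2) else 0))
    - theta 1 ((2 * (p : ℝ) + 1) * m) (m + 1/2) τ 0 *
        ∑ r ∈ Finset.Icc (-p + 1) p, (-1 : ℂ) ^ r *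
          qpow τ (-m * ((r : ℝ) + (k - m) / (2 * m)) ^ 2)

/-- indefinite modular form `g^{(3)[m,p]}_k(τ)` -/
def g3 (m : ℝ) (p : ℤ) (k : ℝ) (τ : ℂ) : ℂ :=
  if k = m then
    e ((m : ℂ) / 2) *
      ((∑' x : ℤ × ℤ, if 0 < x.2 ∧ x.2 ≤ x.1 then
          (-1 : ℂ) ^ x.1 *
            qpow τ ((m + 1/2) * ((x.1 : ℝ) + 2 * m * (p : ℝ) / (2 * m + 1)) ^ 2
              - m * ((x.2 : ℝ) - 1/2 + (p : ℝ)) ^ 2) else 0)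
        - (∑' x : ℤ × ℤ, if x.1 < x.2 ∧ x.2 ≤ 0 then
          (-1 : ℂ) ^ x.1 *
            qpow τ ((m + 1/2) * ((x.1 : ℝ) + 2 * m * (p : ℝ) / (2 * m + 1)) ^ 2
              - m * ((x.2 : ℝ) - 1/2 + (p : ℝ)) ^ 2) else 0))
    + e ((m : ℂ) / 2) * theta (-1) (2 * (p : ℝ) * m) (m + 1/2) τ 0 *
        ∑ r ∈ Finset.Icc 1 p, qpow τ (-m * (2 * (r : ℝ) - 1) ^ 2 / 4)
  else
    ((∑' x : ℤ × ℤ, if 0 ≤ x.2 ∧ x.2 < x.1 then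
        (-1 : ℂ) ^ x.1 * e ((k : ℂ) / 2) *
          qpow τ ((m + 1/2) * ((x.1 : ℝ) + 2 * m * (p : ℝ) / (2 * m + 1)) ^ 2
            - m * ((x.2 : ℝ) + (p : ℝ) + k / (2 * m)) ^ 2) else 0)
      - (∑' x : ℤ × ℤ, if x.1 ≤ x.2 ∧ x.2 < 0 then
        (-1 : ℂ) ^ x.1 * e ((k : ℂ) / 2) *
          qpow τ ((m + 1/2) * ((x.1 : ℝ) + 2 * m * (p : ℝ) / (2 * m + 1)) ^ 2
            - m * ((x.2 : ℝ) + (p : ℝ) + k / (2 * m)) ^ 2) else 0))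
    + ((∑' x : ℤ × ℤ, if 0 ≤ x.2 ∧ x.2 ≤ x.1 then
        (-1 : ℂ) ^ x.1 * e ((k : ℂ) / 2) *
          qpow τ ((m + 1/2) * ((x.1 : ℝ) + 2 * m * (p : ℝ) / (2 * m + 1)) ^ 2
            - m * ((x.2 : ℝ) + (p : ℝ) - k / (2 * m)) ^ 2) else 0)
      - (∑' x : ℤ × ℤ, if x.1 < x.2 ∧ x.2 < 0 then
        (-1 : ℂ) ^ x.1 * e ((k : ℂ) / 2) *
          qpow τ ((m + 1/2) * ((x.1 : ℝ) + 2 * m * (p : ℝ) / (2 * m + 1)) ^ 2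
            - m * ((x.2 : ℝ) + (p : ℝ) - k / (2 * m)) ^ 2) else 0))
    + e ((k : ℂ) / 2) * theta (-1) (2 * (p : ℝ) * m) (m + 1/2) τ 0 *
        ∑ r ∈ Finset.Icc (-p + 1) (p - 1), qpow τ (-(2 * m * (r : ℝ) + k) ^ 2 / (4 * m))

open MeasureTheory Set Filter Complex
open scoped Real

lemma Efun_neg (x : ℝ) : Efun (-x) = -Efun x := by
  have h := intervalIntegral.integral_comp_neg (a := 0) (b := -x)
    (fun t : ℝ => rexp (-π * t ^ 2))
  simp only [neg_sq, neg_zero, neg_neg] at h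
  rw [Efun, Efun, h, intervalIntegral.integral_symm]
  ring

lemma one_sub_Efun_eq (x : ℝ) (hx : 0 ≤ x) :
    1 - Efun x = 2 * ∫ t in Ioi x, rexp (-π * t ^ 2) := by
  have hint := (integrable_exp_neg_mul_sq Real.pi_pos).integrableOn (s := Ioi 0)
  have hsplit := intervalIntegral.integral_interval_add_Ioi hint (hint.mono_set (Ioi_subset_Ioi hx))
  rw [integral_gaussian_Ioi, div_self Real.pi_pos.ne', Real.sqrt_one] at hsplit
  rw [Efun]
  linarith

/-- On `[x, ∞)` with `x ≥ 0` one has `t² ≥ x² + (t - x)²`. -/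
lemma integral_Ioi_gaussian_le (x : ℝ) (hx : 0 ≤ x) :
    ∫ t in Ioi x, rexp (-π * t ^ 2) ≤ rexp (-π * x ^ 2) := by
  have hshift :
      Integrable fun t => rexp (-π * x ^ 2) * rexp (-π * (t - x) ^ 2) :=
    ((integrable_exp_neg_mul_sq Real.pi_pos).comp_sub_right x).const_mul _
  calc ∫ t in Ioi x, rexp (-π * t ^ 2)
      ≤ ∫ t in Ioi x, rexp (-π * x ^ 2) * rexp (-π * (t - x) ^ 2) := by
        refine setIntegral_mono_on (integrable_exp_neg_mul_sq Real.pi_pos).integrableOn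
          hshift.integrableOn measurableSet_Ioi fun t ht => ?_
        rw [← Real.exp_add, Real.exp_le_exp]
        nlinarith [mul_nonneg (mul_nonneg Real.pi_pos.le hx) (sub_nonneg.mpr (mem_Ioi.mp ht).le)]
    _ ≤ ∫ t, rexp (-π * x ^ 2) * rexp (-π * (t - x) ^ 2) :=
        setIntegral_le_integral hshift (Eventually.of_forall fun _ => by positivity)
    _ = rexp (-π * x ^ 2) := by
        rw [integral_const_mul, integral_sub_right_eq_self (fun t => rexp (-π * t ^ 2)),
          integral_gaussian, div_self Real.pi_pos.ne', Real.sqrt_one, mul_one]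

lemma abs_sign_sub_Efun_le (x : ℝ) : |Real.sign x - Efun x| ≤ 2 * rexp (-π * x ^ 2) := by
  have tail : ∀ x : ℝ, 0 < x → |Real.sign x - Efun x| ≤ 2 * rexp (-π * x ^ 2) := by
    intro x hx
    have hnonneg : 0 ≤ ∫ t in Ioi x, rexp (-π * t ^ 2) :=
      setIntegral_nonneg measurableSet_Ioi fun _ _ => (Real.exp_pos _).le
    rw [Real.sign_of_pos hx, one_sub_Efun_eq x hx.le, abs_of_nonneg (by positivity)]
    linarith [integral_Ioi_gaussian_le x hx.le]
  rcases lt_trichotomy x 0 with hx | rfl | hx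
  · have hflip : Real.sign x - Efun x = -(Real.sign (-x) - Efun (-x)) := by
      rw [Real.sign_neg, Efun_neg]; ring
    rw [hflip, abs_neg, ← neg_sq]
    exact tail (-x) (neg_pos.mpr hx)
  · simp [Efun]
  · exact tail x hx

def phase (m : ℝ) (τ w n : ℂ) : ℂ :=
  Complex.exp (-(π : ℂ) * I * τ * n ^ 2 / (2 * (m : ℂ)) + 2 * (π : ℂ) * I * n * w)

def Rterm (ε : ℂ) (j m : ℝ) (τ w : ℂ) (k : ℤ) : ℂ :=
  ε ^ k * ((Real.sign (2 * m * (k : ℝ) + 2 * m - 1 / 2) : ℂ)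
      - (Efun ((j + 2 * m * (k : ℝ) - 2 * m * (w.im / τ.im)) * Real.sqrt (τ.im / m)) : ℂ)) *
    phase m τ w ((j : ℂ) + 2 * (m : ℂ) * (k : ℂ))

lemma Rfun_eq_tsum_Rterm (ε : ℂ) (j m : ℝ) (τ w : ℂ) :
    Rfun ε j m τ w = ∑' k, Rterm ε j m τ w k :=
  rfl

lemma norm_phase (m n : ℝ) (τ w : ℂ) :
    ‖phase m τ w n‖ = rexp (π * τ.im * n ^ 2 / (2 * m) - 2 * π * n * w.im) := by
  have h : -(π : ℂ) * I * τ * (n : ℂ) ^ 2 / (2 * (m : ℂ)) + 2 * (π : ℂ) * I * n * w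
      = ((π * n ^ 2 / (2 * m) : ℝ) : ℂ) * -(τ * I) + ((2 * π * n : ℝ) : ℂ) * (w * I) := by
    push_cast
    ring
  rw [phase, Complex.norm_exp, h, add_re, re_ofReal_mul, re_ofReal_mul, neg_re, mul_I_re, mul_I_re]
  congr 1
  ring

lemma eventually_sign_affine_eq {p q p' q' : ℝ} (hp : 0 < p) (hp' : 0 < p') :
    ∀ᶠ k : ℤ in cofinite, Real.sign (p * k + q) = Real.sign (p' * k + q') := by
  have top : ∀ {p : ℝ} (q : ℝ), 0 < p → ∀ᶠ x : ℝ in atTop, 0 < p * x + q := fun _ hp =>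
    (tendsto_atTop_add_const_right _ _ (tendsto_id.const_mul_atTop hp)).eventually_gt_atTop 0
  have bot : ∀ {p : ℝ} (q : ℝ), 0 < p → ∀ᶠ x : ℝ in atBot, p * x + q < 0 := fun _ hp =>
    (tendsto_atBot_add_const_right _ _ (tendsto_id.const_mul_atBot hp)).eventually_lt_atBot 0
  rw [Int.cofinite_eq, eventually_sup]
  refine ⟨((bot q hp).and (bot q' hp')).intCast_atBot.mono fun k h => ?_,
    ((top q hp).and (top q' hp')).intCast_atTop.mono fun k h => ?_⟩
  · rw [Real.sign_of_neg h.1, Real.sign_of_neg h.2]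
  · rw [Real.sign_of_pos h.1, Real.sign_of_pos h.2]

lemma summable_Rterm {ε : ℂ} (hε : ‖ε‖ = 1) (j : ℝ) {m : ℝ} (hm : 0 < m) {τ : ℂ}
    (hτ : 0 < τ.im) (w : ℂ) : Summable (Rterm ε j m τ w) := by
  set y := τ.im
  set α := w.im / τ.im
  set r := Real.sqrt (y / m)
  have hr2 : r ^ 2 = y / m := Real.sq_sqrt (div_pos hτ hm).le
  have hwim : w.im = α * y := (div_mul_cancel₀ _ hτ.ne').symm
  refine Summable.of_norm_bounded_eventually
    (g := fun k => 2 * ‖jacobiTheta₂_term k ((y * (j - 2 * m * α) : ℝ) * I) ((2 * m * y : ℝ) * I)‖)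
    (((summable_jacobiTheta₂_term_iff _ _).mpr
      (by simp only [Complex.mul_I_im, Complex.ofReal_re]; positivity)).norm.mul_left 2) ?_
  filter_upwards [eventually_sign_affine_eq (q := 2 * m - 1 / 2) (q' := (j - 2 * m * α) * r)
    (by positivity : 0 < 2 * m) (by positivity : 0 < 2 * m * r)] with k hk
  set x := (j + 2 * m * k - 2 * m * α) * r with hx
  have hsign : Real.sign (2 * m * k + 2 * m - 1 / 2) = Real.sign x := by
    rw [hx, show 2 * m * k + 2 * m - 1 / 2 = 2 * m * k + (2 * m - 1 / 2) by ring, hk]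
    ring_nf
  have hn : (j : ℂ) + 2 * (m : ℂ) * (k : ℂ) = ((j + 2 * m * k : ℝ) : ℂ) := by push_cast; ring
  rw [Rterm, norm_mul, norm_mul, norm_zpow, hε, one_zpow, one_mul, ← Complex.ofReal_sub,
    Complex.norm_real, Real.norm_eq_abs, hsign, hn, norm_phase, norm_jacobiTheta₂_term]
  simp only [Complex.mul_I_im, Complex.ofReal_re]
  -- completing the square in `k`
  have hgap : (-π * k ^ 2 * (2 * m * y) - 2 * π * k * (y * (j - 2 * m * α)))
      - (-π * x ^ 2 + (π * y * (j + 2 * m * k) ^ 2 / (2 * m)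
          - 2 * π * (j + 2 * m * k) * w.im))
      = π * y * (j - 2 * m * α) ^ 2 / (2 * m) + 2 * π * y * m * α ^ 2 := by
    rw [hx, mul_pow, hr2, hwim]
    field_simp
    ring
  calc |Real.sign x - Efun x| * rexp (π * y * (j + 2 * m * k) ^ 2 / (2 * m)
          - 2 * π * (j + 2 * m * k) * w.im)
      ≤ 2 * rexp (-π * x ^ 2) * rexp (π * y * (j + 2 * m * k) ^ 2 / (2 * m)
          - 2 * π * (j + 2 * m * k) * w.im) := by
        gcongr
        exact abs_sign_sub_Efun_le x
    _ ≤ _ := by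
        rw [mul_assoc, ← Real.exp_add]
        gcongr
        linarith [show 0 ≤ π * y * (j - 2 * m * α) ^ 2 / (2 * m) + 2 * π * y * m * α ^ 2
          by positivity]

lemma e_add (x y : ℂ) : e (x + y) = e x * e y := by
  rw [e, e, e, ← Complex.exp_add]
  ring_nf

lemma e_add_intCast (x : ℂ) (n : ℤ) : e (x + n) = e x := by
  have hn : e n = 1 := by
    rw [e, show 2 * (π : ℂ) * I * n = n * (2 * π * I) by ring]
    exact Complex.exp_int_mul_two_pi_mul_I n
  rw [e_add, hn, mul_one]

lemma sign_two_mul_add_two_mul_sub_half {m : ℝ} (hm : 1 < 4 * m) (k : ℤ) :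
    Real.sign (2 * m * k + 2 * m - 1 / 2) = if 0 ≤ k then 1 else -1 := by
  split_ifs with hk
  · have : (0 : ℝ) ≤ k := by exact_mod_cast hk
    exact Real.sign_of_pos (by nlinarith)
  · have : (k : ℝ) + 1 ≤ 0 := by exact_mod_cast (by omega : k + 1 ≤ 0)
    exact Real.sign_of_neg (by nlinarith)

lemma Rterm_sub_mul_Rterm_of_add_eq {ε : ℂ} {j j' m : ℝ} {τ w : ℂ} {k k' : ℤ}
    (hn : (j + 2 * m * k) + (j' + 2 * m * k') = 4 * m * (w.im / τ.im))
    (hphase : ε * ε ^ k' * phase m τ w ((j' : ℂ) + 2 * (m : ℂ) * (k' : ℂ))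
      = -(ε ^ k * phase m τ w ((j : ℂ) + 2 * (m : ℂ) * (k : ℂ)))) :
    Rterm ε j m τ w k - ε * Rterm ε j' m τ w k'
      = (Real.sign (2 * m * k + 2 * m - 1 / 2) + Real.sign (2 * m * k' + 2 * m - 1 / 2) : ℝ)
        * (ε ^ k * phase m τ w ((j : ℂ) + 2 * (m : ℂ) * (k : ℂ))) := by
  have hE : (j' + 2 * m * k' - 2 * m * (w.im / τ.im)) * Real.sqrt (τ.im / m)
      = -((j + 2 * m * k - 2 * m * (w.im / τ.im)) * Real.sqrt (τ.im / m)) := by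
    linear_combination Real.sqrt (τ.im / m) * hn
  rw [Rterm, Rterm, hE, Efun_neg]
  push_cast
  linear_combination (-((Real.sign (2 * m * k' + 2 * m - 1 / 2) : ℂ)
    + Efun ((j + 2 * m * k - 2 * m * (w.im / τ.im)) * Real.sqrt (τ.im / m)))) * hphase

lemma phase_reflect {m : ℝ} (hm : m ≠ 0) (τ a b n : ℂ) :
    phase m τ (a * τ + b) (4 * m * a - n)
      = e ((4 * m * a - 2 * n) * b) * phase m τ (a * τ + b) n := by
  have hmC : (m : ℂ) ≠ 0 := Complex.ofReal_ne_zero.mpr hm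
  rw [phase, phase, e, ← Complex.exp_add]
  congr 1
  field_simp
  ring

lemma phase_eq_e_mul_qpow {m : ℝ} (hm : m ≠ 0) (τ : ℂ) (a b n : ℝ) :
    phase m τ (a * τ + b) n = e (n * b) * qpow τ (-(n * (n - 4 * m * a)) / (4 * m)) := by
  have hmC : (m : ℂ) ≠ 0 := Complex.ofReal_ne_zero.mpr hm
  rw [phase, qpow, e, ← Complex.exp_add]
  congr 1
  push_cast
  field_simp
  ring

lemma zpow_natCast_sub_of_sq_eq_one {ε : ℂ} (hε : ε ^ 2 = 1) (n : ℕ) (K : ℤ) :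
    ε ^ ((n : ℤ) - K) = ε ^ n * ε ^ K := by
  have hε0 : ε ≠ 0 := by rintro rfl; norm_num at hε
  rw [zpow_sub₀ hε0, zpow_natCast, div_eq_mul_inv, inv_eq_of_mul_eq_one_right]
  rw [← mul_zpow, ← sq, hε, one_zpow]

section HalfIntegral

variable {ε τ : ℂ} {m s b a j : ℝ} {nm na : ℕ} {ns nb nj : ℤ}

lemma mul_zpow_mul_phase_reflect (hm : m = nm / 2) (hnm : 0 < nm) (hs : s = ns / 2)
    (hb : b = nb / 2) (hj : j = s + nj) (ha : a = na / 2) (hε : ε ^ 2 = 1)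
    (hcond : ε ^ na * e (2 * s * b) * e (4 * m * a * b) = -1) (K : ℤ) :
    ε * ε ^ (K - 1) * phase m τ (a * τ + b) (((2 * m - j : ℝ) : ℂ) + 2 * m * ((K - 1 : ℤ) : ℂ))
      = -(ε ^ ((na : ℤ) - K) * phase m τ (a * τ + b) (j + 2 * m * ((na - K : ℤ) : ℂ))) := by
  have hε0 : ε ≠ 0 := by rintro rfl; norm_num at hε
  have hεna : ε ^ na * ε ^ na = 1 := by rw [← mul_pow, ← sq, hε, one_pow]
  set n : ℂ := j + 2 * m * ((na - K : ℤ) : ℂ) with hn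
  have hpartner : ((2 * m - j : ℝ) : ℂ) + 2 * m * ((K - 1 : ℤ) : ℂ) = 4 * m * a - n := by
    rw [hn, ha]; push_cast; ring
  have hreflect : e ((4 * m * a - 2 * n) * b) = e (2 * s * b) * e (4 * m * a * b) := by
    rw [← e_add, ← e_add_intCast _ (ns * nb + nj * nb + nm * nb * (na - K))]
    congr 1
    rw [hn, hj, hm, hs, hb, ha]; push_cast; ring
  rw [hpartner, phase_reflect (by rw [hm]; positivity), hreflect,
    zpow_natCast_sub_of_sq_eq_one hε, ← zpow_one_add₀ hε0, add_sub_cancel]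
  linear_combination (ε ^ K * phase m τ (a * τ + b) n)
    * (ε ^ na * hcond - e (2 * s * b) * e (4 * m * a * b) * hεna)

lemma zpow_mul_phase_eq_qpow (hm : m = nm / 2) (hnm : 0 < nm) (hs : s = ns / 2)
    (hb : b = nb / 2) (ha : a = na / 2) (hε : ε ^ 2 = 1)
    (hcond : ε ^ na * e (2 * s * b) * e (4 * m * a * b) = -1) (K : ℤ) :
    ε ^ ((na : ℤ) - K) * phase m τ (a * τ + b) (j + 2 * m * ((na - K : ℤ) : ℂ))
      = -(e (j * b) * e (2 * s * b) * (ε ^ K * e (2 * m * b * K)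
          * qpow τ (-((j + 2 * m * (2 * a - K)) * (j - 2 * m * K)) / (4 * m)))) := by
  have hsb : e (2 * s * b) * e (2 * s * b) = 1 := by
    rw [← e_add, show 2 * (s : ℂ) * b + 2 * s * b = 0 + ((ns * nb : ℤ) : ℂ) by
      rw [hs, hb]; push_cast; ring, e_add_intCast, e, mul_zero, Complex.exp_zero]
  have hn : j + 2 * m * ((na - K : ℤ) : ℂ) = ((j + 2 * m * (2 * a - K) : ℝ) : ℂ) := by
    rw [ha]; push_cast; ring
  have he : e (((j + 2 * m * (2 * a - K) : ℝ) : ℂ) * b)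
      = e (j * b) * e (4 * m * a * b) * e (2 * m * b * K) := by
    rw [← e_add, ← e_add, ← e_add_intCast _ (nm * nb * K)]
    congr 1
    rw [hm, hb, ha]; push_cast; ring
  rw [hn, phase_eq_e_mul_qpow (by rw [hm]; positivity), he, zpow_natCast_sub_of_sq_eq_one hε,
    show j + 2 * m * (2 * a - K) - 4 * m * a = j - 2 * m * K by ring]
  linear_combination ε ^ K * e (j * b) * e (2 * m * b * K)
    * qpow τ (-((j + 2 * m * (2 * a - K)) * (j - 2 * m * K)) / (4 * m))
    * (e (2 * s * b) * hcond - ε ^ na * e (4 * m * a * b) * hsb)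

lemma Rterm_sub_mul_Rterm_eq_ite (hm : m = nm / 2) (hnm : 0 < nm) (hs : s = ns / 2)
    (hb : b = nb / 2) (hj : j = s + nj) (ha : a = na / 2) (hτ : τ.im ≠ 0) (hε : ε ^ 2 = 1)
    (hcond : ε ^ na * e (2 * s * b) * e (4 * m * a * b) = -1) (K : ℤ) :
    Rterm ε j m τ (a * τ + b) (na - K) - ε * Rterm ε (2 * m - j) m τ (a * τ + b) (K - 1)
      = if 1 ≤ K ∧ K ≤ na then -2 * e (j * b) * e (2 * s * b) * (ε ^ K * e (2 * m * b * K)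
          * qpow τ (-((j + 2 * m * (2 * a - K)) * (j - 2 * m * K)) / (4 * m)))
        else 0 := by
  have h4m : 1 < 4 * m := by
    have : (1 : ℝ) ≤ nm := by exact_mod_cast hnm
    rw [hm]; linarith
  have hsum : (j + 2 * m * ((na - K : ℤ) : ℝ)) + ((2 * m - j) + 2 * m * ((K - 1 : ℤ) : ℝ))
      = 4 * m * ((a * τ + b).im / τ.im) := by
    rw [show (a * τ + b).im / τ.im = a by simp [hτ], ha]; push_cast; ring
  rw [Rterm_sub_mul_Rterm_of_add_eq hsum
      (mul_zpow_mul_phase_reflect hm hnm hs hb hj ha hε hcond K),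
    zpow_mul_phase_eq_qpow hm hnm hs hb ha hε hcond, sign_two_mul_add_two_mul_sub_half h4m,
    sign_two_mul_add_two_mul_sub_half h4m]
  split_ifs <;> first | omega | (push_cast; ring)

theorem Rfun_sub_mul_Rfun_two_mul_sub (hm : m = nm / 2) (hnm : 0 < nm) (hs : s = ns / 2)
    (hb : b = nb / 2) (hj : j = s + nj) (ha : a = na / 2) (hτ : 0 < τ.im) (hε : ε ^ 2 = 1)
    (hcond : ε ^ na * e (2 * s * b) * e (4 * m * a * b) = -1) :
    Rfun ε j m τ (a * τ + b) - ε * Rfun ε (2 * m - j) m τ (a * τ + b)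
      = -2 * e (j * b) * e (2 * s * b) * ∑ k ∈ Finset.Icc 1 na, ε ^ k * e (2 * m * b * k) *
          qpow τ (-((j + 2 * m * (2 * a - k)) * (j - 2 * m * k)) / (4 * m)) := by
  have hε1 : ‖ε‖ = 1 := by
    have h := congrArg norm hε
    rwa [norm_pow, norm_one, pow_eq_one_iff_of_nonneg (norm_nonneg ε) two_ne_zero] at h
  have hm0 : 0 < m := by rw [hm]; positivity
  set w := (a : ℂ) * τ + b
  have hR : Rfun ε j m τ w = ∑' K : ℤ, Rterm ε j m τ w (na - K) :=
    ((Equiv.subLeft (na : ℤ)).tsum_eq (Rterm ε j m τ w)).symm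
  have hR' : Rfun ε (2 * m - j) m τ w = ∑' K : ℤ, Rterm ε (2 * m - j) m τ w (K - 1) :=
    ((Equiv.subRight (1 : ℤ)).tsum_eq (Rterm ε (2 * m - j) m τ w)).symm
  have hS : Summable fun K : ℤ => Rterm ε j m τ w (na - K) :=
    (Equiv.summable_iff (Equiv.subLeft (na : ℤ)) (f := Rterm ε j m τ w)).mpr
      (summable_Rterm hε1 j hm0 hτ w)
  have hS' : Summable fun K : ℤ => Rterm ε (2 * m - j) m τ w (K - 1) :=
    (Equiv.summable_iff (Equiv.subRight (1 : ℤ)) (f := Rterm ε (2 * m - j) m τ w)).mpr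
      (summable_Rterm hε1 (2 * m - j) hm0 hτ w)
  rw [hR, hR', ← tsum_mul_left, ← hS.tsum_sub (hS'.mul_left ε),
    tsum_congr (Rterm_sub_mul_Rterm_eq_ite hm hnm hs hb hj ha hτ.ne' hε hcond),
    tsum_eq_sum (s := (Finset.Icc 1 na).map Nat.castEmbedding), Finset.sum_map, Finset.mul_sum]
  · refine Finset.sum_congr rfl fun k hk => ?_
    rw [Finset.mem_Icc] at hk
    rw [Nat.castEmbedding_apply, if_pos (by omega), zpow_natCast, Int.cast_natCast,
      Int.cast_natCast]
  · refine fun K hK => if_neg fun hK' => hK ?_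
    rw [Finset.mem_map]
    exact ⟨K.toNat, Finset.mem_Icc.mpr (by omega),
      by simp only [Nat.castEmbedding_apply]; omega⟩

end HalfIntegral

theorem statement8 (m : ℝ) (hm : ∃ n : ℕ, 0 < n ∧ m = (n : ℝ) / 2)
    (s b : ℝ) (hs : ∃ n : ℤ, s = (n : ℝ) / 2) (hb : ∃ n : ℤ, b = (n : ℝ) / 2)
    (na : ℕ) (a : ℝ) (ha : a = (na : ℝ) / 2)
    (j : ℝ) (hjs : ∃ n : ℤ, j = s + (n : ℝ))
    (τ : ℂ) (hτ : 0 < τ.im) :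
    (e (2 * (s : ℂ) * (b : ℂ)) * e (4 * (m : ℂ) * (a : ℂ) * (b : ℂ)) = -1 →
      Rfun 1 j m τ ((a : ℂ) * τ + (b : ℂ)) - Rfun 1 (2 * m - j) m τ ((a : ℂ) * τ + (b : ℂ))
        = -2 * e ((j : ℂ) * (b : ℂ)) * e (2 * (s : ℂ) * (b : ℂ)) *
            ∑ k ∈ Finset.Icc 1 na, e (2 * (m : ℂ) * (b : ℂ) * (k : ℂ)) *
              qpow τ (-((j + 2 * m * (2 * a - (k : ℝ))) * (j - 2 * m * (k : ℝ))) / (4 * m))) ∧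
    ((-1 : ℂ) ^ na * e (2 * (s : ℂ) * (b : ℂ)) * e (4 * (m : ℂ) * (a : ℂ) * (b : ℂ)) = -1 →
      Rfun (-1) j m τ ((a : ℂ) * τ + (b : ℂ)) + Rfun (-1) (2 * m - j) m τ ((a : ℂ) * τ + (b : ℂ))
        = -2 * e ((j : ℂ) * (b : ℂ)) * e (2 * (s : ℂ) * (b : ℂ)) *
            ∑ k ∈ Finset.Icc 1 na, (-1 : ℂ) ^ k * e (2 * (m : ℂ) * (b : ℂ) * (k : ℂ)) *
              qpow τ (-((j + 2 * m * (2 * a - (k : ℝ))) * (j - 2 * m * (k : ℝ))) / (4 * m))) := by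
  obtain ⟨nm, hnm, hm⟩ := hm
  obtain ⟨ns, hs⟩ := hs
  obtain ⟨nb, hb⟩ := hb
  obtain ⟨nj, hjs⟩ := hjs
  refine ⟨fun hcond => ?_, fun hcond => ?_⟩
  · simpa using Rfun_sub_mul_Rfun_two_mul_sub (ε := 1) hm hnm hs hb hjs ha hτ (one_pow 2)
      (by simpa using hcond)
  · simpa using
      Rfun_sub_mul_Rfun_two_mul_sub (ε := -1) hm hnm hs hb hjs ha hτ (by norm_num) hcond

end Mock
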